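/- arXiv:1812.01757 — 3 statements merged into one kernel-verified Lean document; each statement's English description precedes it below -/
import Mathlib

section
/- Let I = ⟨p_1,...,p_r⟩ be a monomial ideal in R = k[x̄] with d_j = deg p_j and m_{ij} = lcm(p_i,p_j)/p_j. Then HF(R/I, t) = F(a,t) − F(a, t−d_1) − Σ_{j=2}^{r} HF(R/⟨m_{1j}, m_{2j}, ..., m_{(j−1)j}⟩, t − d_j). -/
open MvPolynomial

/-- The total degree of an exponent vector. -/
def degD {a : ℕ} (d : Fin a →₀ ℕ) : ℕ := d.sum fun _ e => e

/-- `F a m` : the number of monomials of degree `m` in `a` variables. -/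
def F (a : ℕ) (m : ℤ) : ℕ := if 0 ≤ m then (a - 1 + m.toNat).choose m.toNat else 0

/-- Hilbert function of the quotient `k[x_1,…,x_a]/I` in degree `t`. -/
noncomputable def HFq {k : Type*} [Field k] (a : ℕ)
    (I : Ideal (MvPolynomial (Fin a) k)) (t : ℕ) : ℕ :=
  Module.finrank k ((homogeneousSubmodule (Fin a) k t).map (I.restrictScalars k).mkQ)

/-- Hilbert function of the quotient, extended by `0` to negative degrees. -/
noncomputable def HFqZ {k : Type*} [Field k] (a : ℕ)
    (I : Ideal (MvPolynomial (Fin a) k)) (t : ℤ) : ℤ :=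
  if 0 ≤ t then (HFq a I t.toNat : ℤ) else 0

section SyzygyAux

open scoped Classical

variable {k : Type*} [Field k] {a : ℕ}

lemma degD_add (d e : Fin a →₀ ℕ) : degD (d + e) = degD d + degD e := by
  simp [degD, Finsupp.sum_add_index']

lemma degD_mono {d e : Fin a →₀ ℕ} (h : d ≤ e) : degD d ≤ degD e := by
  have h1 : degD d = ∑ i, d i := Finsupp.sum_fintype _ _ (fun _ => rfl)
  have h2 : degD e = ∑ i, e i := Finsupp.sum_fintype _ _ (fun _ => rfl)
  rw [h1, h2]
  exact Finset.sum_le_sum fun i _ => h i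

/-- The finset of all exponent vectors of total degree `t`. -/
noncomputable def Tset (a t : ℕ) : Finset (Fin a →₀ ℕ) :=
  (Finset.Iic (Finsupp.equivFunOnFinite.symm fun _ => t)).filter (fun d => degD d = t)

lemma mem_Tset {t : ℕ} {d : Fin a →₀ ℕ} : d ∈ Tset a t ↔ degD d = t := by
  simp only [Tset, Finset.mem_filter, Finset.mem_Iic, and_iff_right_iff_imp]
  intro h i
  have := Finsupp.le_degree i d
  rw [show Finsupp.degree d = degD d from rfl, h] at this
  simpa using this

/-- The equivalence between degree-`t` exponent vectors and multisets of size `t`. -/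
noncomputable def tsetEquiv (a t : ℕ) : {d : Fin a →₀ ℕ // degD d = t} ≃ Sym (Fin a) t where
  toFun d := ⟨Finsupp.toMultiset d.1, by
    rw [Finsupp.card_toMultiset]; exact d.2⟩
  invFun m := ⟨Multiset.toFinsupp m.1, by
    have : degD (Multiset.toFinsupp m.1)
        = Multiset.card ((Multiset.toFinsupp m.1).toMultiset) := by
      rw [Finsupp.card_toMultiset]; rfl
    rw [this, Multiset.toFinsupp_toMultiset]; exact m.2⟩
  left_inv d := by ext : 1; simp
  right_inv m := by ext : 1; simp

lemma card_Tset (ha : 1 ≤ a) (t : ℕ) : (Tset a t).card = F a t := by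
  have h1 : (Tset a t).card = Nat.card {d : Fin a →₀ ℕ // d ∈ Tset a t} := by
    rw [Nat.card_eq_fintype_card, Fintype.card_coe]
  rw [h1, Nat.card_congr ((Equiv.subtypeEquivRight (fun d => mem_Tset)).trans (tsetEquiv a t)),
    Nat.card_eq_fintype_card, Sym.card_sym_eq_choose, Fintype.card_fin]
  have : a + t - 1 = a - 1 + t := by omega
  rw [this]
  simp [F]

lemma mono_mem_span {Q : Set (Fin a →₀ ℕ)} {d : Fin a →₀ ℕ} :
    (monomial d (1:k)) ∈ Ideal.span ((fun s => monomial s (1:k)) '' Q) ↔ ∃ s ∈ Q, s ≤ d := by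
  rw [mem_ideal_span_monomial_image]
  constructor
  · intro h
    exact h d (by simp [support_monomial])
  · intro h xi hxi
    rw [support_monomial, if_neg one_ne_zero, Finset.mem_singleton] at hxi
    subst hxi; exact h

/-- The Hilbert function of a quotient by a monomial ideal counts the standard monomials. -/
lemma hfq_card (Q : Set (Fin a →₀ ℕ)) (t : ℕ) :
    HFq (k := k) a (Ideal.span ((fun s => monomial s (1:k)) '' Q)) t
      = ((Tset a t).filter fun d => ¬ ∃ s ∈ Q, s ≤ d).card := by
  set I : Ideal (MvPolynomial (Fin a) k) := Ideal.span ((fun s => monomial s (1:k)) '' Q) with hI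
  set J : Submodule k (MvPolynomial (Fin a) k) := I.restrictScalars k with hJ
  set B : Finset (Fin a →₀ ℕ) := (Tset a t).filter fun d => ¬ ∃ s ∈ Q, s ≤ d with hB
  have memJ : ∀ {x : MvPolynomial (Fin a) k}, x ∈ J ↔ x ∈ I := fun {x} => Iff.rfl
  set v : B → (MvPolynomial (Fin a) k ⧸ J) := fun d => J.mkQ (monomial d.1 1) with hv
  -- Step A : the image is the span of v
  have stepA : (homogeneousSubmodule (Fin a) k t).map J.mkQ = Submodule.span k (Set.range v) := by
    rw [homogeneousSubmodule_eq_finsupp_supported, AddMonoidAlgebra.supported_eq_span_single,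
      Submodule.map_span]
    apply le_antisymm
    · rw [Submodule.span_le]
      rintro _ ⟨_, ⟨d, hd, rfl⟩, rfl⟩
      by_cases hc : ∃ s ∈ Q, s ≤ d
      · have h0 : J.mkQ (AddMonoidAlgebra.single d (1:k)) = 0 := by
          rw [Submodule.mkQ_apply, Submodule.Quotient.mk_eq_zero]
          rw [memJ, single_eq_monomial]
          exact mono_mem_span.mpr hc
        rw [h0]
        exact Submodule.zero_mem _
      · have hdB : d ∈ B := Finset.mem_filter.mpr ⟨mem_Tset.mpr hd, hc⟩
        apply Submodule.subset_span
        exact ⟨⟨d, hdB⟩, by simp [hv, single_eq_monomial]⟩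
    · rw [Submodule.span_le]
      rintro _ ⟨⟨d, hd⟩, rfl⟩
      apply Submodule.subset_span
      exact ⟨AddMonoidAlgebra.single d 1, ⟨d, mem_Tset.mp (Finset.mem_filter.mp hd).1, rfl⟩,
        by rw [single_eq_monomial]⟩
  -- Step B : linear independence
  have hw : LinearIndependent k (fun d : B => (monomial d.1 (1:k) : MvPolynomial (Fin a) k)) := by
    have := (basisMonomials (Fin a) k).linearIndependent.comp
      (fun d : B => d.1) Subtype.val_injective
    rwa [coe_basisMonomials] at this
  have hrange : Set.range (fun d : B => (monomial d.1 (1:k) : MvPolynomial (Fin a) k))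
      = (fun d => AddMonoidAlgebra.single d (1:k)) '' (↑B : Set (Fin a →₀ ℕ)) := by
    ext x
    constructor
    · rintro ⟨⟨d, hd⟩, rfl⟩
      exact ⟨d, hd, (single_eq_monomial d 1)⟩
    · rintro ⟨d, hd, rfl⟩
      exact ⟨⟨d, hd⟩, (single_eq_monomial d 1).symm⟩
  have hdisj : Disjoint (Submodule.span k
      (Set.range (fun d : B => (monomial d.1 (1:k) : MvPolynomial (Fin a) k)))) J := by
    rw [hrange, ← AddMonoidAlgebra.supported_eq_span_single]
    rw [Submodule.disjoint_def]
    intro x hx hxJ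
    have hsupp : ↑(MvPolynomial.support x) ⊆ (↑B : Set (Fin a →₀ ℕ)) := AddMonoidAlgebra.mem_supported.mp hx
    have hmem := MvPolynomial.mem_ideal_span_monomial_image.mp (memJ.mp hxJ)
    have : MvPolynomial.support x = ∅ := by
      by_contra hne
      obtain ⟨e, he⟩ := Finset.nonempty_iff_ne_empty.mpr hne
      have heB : e ∈ B := hsupp he
      exact (Finset.mem_filter.mp heB).2 (hmem e he)
    exact MvPolynomial.support_eq_empty.mp this
  have hvli : LinearIndependent k v := by
    have := LinearIndependent.map hw (f := J.mkQ) (by rw [Submodule.ker_mkQ]; exact hdisj)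
    exact this
  -- Step C
  show Module.finrank k ((homogeneousSubmodule (Fin a) k t).map J.mkQ) = B.card
  rw [stepA, finrank_span_eq_card hvli, Fintype.card_coe]

lemma count_step (Q : Set (Fin a →₀ ℕ)) (q : Fin a →₀ ℕ) (t : ℕ) :
    ((Tset a t).filter fun d => q ≤ d ∧ ¬ ∃ s ∈ Q, s ≤ d).card
      + ((Tset a t).filter fun d => ¬ ∃ s ∈ insert q Q, s ≤ d).card
      = ((Tset a t).filter fun d => ¬ ∃ s ∈ Q, s ≤ d).card := by
  have e1 : ((Tset a t).filter fun d => q ≤ d ∧ ¬ ∃ s ∈ Q, s ≤ d)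
      = ((Tset a t).filter fun d => ¬ ∃ s ∈ Q, s ≤ d).filter (fun d => q ≤ d) := by
    rw [Finset.filter_filter]; apply Finset.filter_congr; intro d _; tauto
  have e2 : ((Tset a t).filter fun d => ¬ ∃ s ∈ insert q Q, s ≤ d)
      = ((Tset a t).filter fun d => ¬ ∃ s ∈ Q, s ≤ d).filter (fun d => ¬ q ≤ d) := by
    rw [Finset.filter_filter]; apply Finset.filter_congr; intro d _
    simp only [Set.mem_insert_iff]
    constructor
    · intro h; exact ⟨fun ⟨s, hs, hle⟩ => h ⟨s, Or.inr hs, hle⟩, fun hq => h ⟨q, Or.inl rfl, hq⟩⟩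
    · rintro ⟨h1, h2⟩ ⟨s, hs | hs, hle⟩
      · exact h2 (hs ▸ hle)
      · exact h1 ⟨s, hs, hle⟩
  rw [e1, e2, Finset.card_filter_add_card_filter_not]

lemma count_div (Q : Set (Fin a →₀ ℕ)) (q : Fin a →₀ ℕ) {t : ℕ} (h : degD q ≤ t) :
    ((Tset a t).filter fun d => q ≤ d ∧ ¬ ∃ s ∈ Q, s ≤ d).card
      = ((Tset a (t - degD q)).filter
          fun e => ¬ ∃ s ∈ (fun s => (s ⊔ q) - q) '' Q, s ≤ e).card := by
  apply Finset.card_bij (fun d _ => d - q)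
  · intro d hd
    rw [Finset.mem_filter] at hd
    obtain ⟨hdT, hqd, hnc⟩ := hd
    have hdeg : degD (d - q) + degD q = t := by
      rw [← degD_add, tsub_add_cancel_of_le hqd, mem_Tset.mp hdT]
    rw [Finset.mem_filter, mem_Tset]
    refine ⟨by omega, ?_⟩
    rintro ⟨_, ⟨s, hs, rfl⟩, hle⟩
    have h1 : s ⊔ q ≤ d := by
      have := tsub_le_iff_right.mp hle
      rwa [tsub_add_cancel_of_le hqd] at this
    exact hnc ⟨s, hs, le_sup_left.trans h1⟩
  · intro d1 h1 d2 h2 heq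
    rw [Finset.mem_filter] at h1 h2
    have := congrArg (· + q) heq
    simpa [tsub_add_cancel_of_le h1.2.1, tsub_add_cancel_of_le h2.2.1] using this
  · intro e he
    rw [Finset.mem_filter, mem_Tset] at he
    refine ⟨e + q, ?_, by simp⟩
    rw [Finset.mem_filter, mem_Tset, degD_add, he.1]
    refine ⟨by omega, le_add_self, ?_⟩
    rintro ⟨s, hs, hle⟩
    refine he.2 ⟨(s ⊔ q) - q, ⟨s, hs, rfl⟩, ?_⟩
    rw [tsub_le_iff_right]
    exact sup_le hle le_add_self

lemma count_empty (Q : Set (Fin a →₀ ℕ)) (q : Fin a →₀ ℕ) {t : ℕ} (h : t < degD q) :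
    ((Tset a t).filter fun d => q ≤ d ∧ ¬ ∃ s ∈ Q, s ≤ d) = ∅ := by
  rw [Finset.filter_eq_empty_iff]
  intro d hd
  rintro ⟨hqd, -⟩
  have := degD_mono hqd
  rw [mem_Tset.mp hd] at this
  omega

lemma count_all (Q : Set (Fin a →₀ ℕ)) (t : ℕ) (h : ∃ s ∈ Q, s = 0) :
    ((Tset a t).filter fun d => ¬ ∃ s ∈ Q, s ≤ d) = ∅ := by
  rw [Finset.filter_eq_empty_iff]
  intro d _ hcon
  obtain ⟨s, hsQ, hs0⟩ := h
  exact hcon ⟨s, hsQ, hs0.le.trans zero_le⟩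

end SyzygyAux

open scoped Classical

/-- Syzygy method: for a monomial ideal `I = ⟨p_1,…,p_r⟩` in
`R = k[x_1,…,x_a]` with `d_j = deg p_j` and syzygy monomials
`m_{ij} = lcm(p_i,p_j)/p_j` (exponent vector `(p_i ⊔ p_j) − p_j`),
`HF(R/I,t) = F(a,t) − F(a,t−d_1) − Σ_{j=2}^{r} HF(R/⟨m_{1j},…,m_{(j−1)j}⟩, t−d_j)`.
(Indices are written `0,…,r−1`, so `p_1` is `p 0` and the sum runs over
`j ∈ {1,…,r−1}`.) -/
theorem syzygy_method {k : Type*} [Field k] (a r t : ℕ) (hr : 1 ≤ r)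
    (p : ℕ → (Fin a →₀ ℕ)) :
    (HFq (k := k) a (Ideal.span
        ((fun i => (monomial (p i) 1 : MvPolynomial (Fin a) k)) '' (Set.Iio r))) t : ℤ)
      = (F a t : ℤ) - F a ((t : ℤ) - degD (p 0))
        - ∑ j ∈ Finset.Ico 1 r,
            HFqZ (k := k) a (Ideal.span
              ((fun i => (monomial ((p i ⊔ p j) - p j) 1 : MvPolynomial (Fin a) k)) ''
                (Set.Iio j)))
              ((t : ℤ) - degD (p j)) := by
  have gen : ∀ (r' : ℕ), ((fun i => (monomial (p i) 1 : MvPolynomial (Fin a) k)) '' (Set.Iio r'))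
      = ((fun s => monomial s (1:k)) '' (p '' Set.Iio r')) :=
    fun r' => (Set.image_image (fun s => (monomial s (1:k) : MvPolynomial (Fin a) k)) p (Set.Iio r')).symm
  induction r, hr using Nat.le_induction with
  | base =>
    rw [gen, hfq_card, Finset.Ico_self, Finset.sum_empty, sub_zero]
    have hQ1 : p '' Set.Iio 1 = {p 0} := by
      rw [show (Set.Iio 1 : Set ℕ) = {0} from by ext x; simp [Nat.lt_one_iff]]
      simp
    rw [hQ1]
    by_cases ha : a = 0
    · subst ha
      have hp0 : p 0 = 0 := Subsingleton.elim _ _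
      have hd0 : degD (p 0) = 0 := by rw [hp0]; simp [degD]
      rw [count_all ({p 0} : Set (Fin 0 →₀ ℕ)) t ⟨p 0, rfl, hp0⟩, Finset.card_empty, hd0]
      simp
    · have ha' : 1 ≤ a := Nat.one_le_iff_ne_zero.mpr ha
      by_cases hle : degD (p 0) ≤ t
      · have hstep := count_step (a := a) ∅ (p 0) t
        have hdiv := count_div (a := a) ∅ (p 0) hle
        have hEmp : ∀ t', ((Tset a t').filter
            fun d => ¬ ∃ s ∈ (∅ : Set (Fin a →₀ ℕ)), s ≤ d) = Tset a t' := by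
          intro t'; apply Finset.filter_true_of_mem; simp
        rw [hEmp, LawfulSingleton.insert_empty_eq] at hstep
        rw [Set.image_empty, hEmp] at hdiv
        rw [show ((t:ℤ) - degD (p 0)) = ((t - degD (p 0) : ℕ) : ℤ) from by omega,
          ← card_Tset ha' t, ← card_Tset ha' (t - degD (p 0))]
        omega
      · have hF2 : (F a ((t:ℤ) - degD (p 0)) : ℤ) = 0 := by
          rw [F, if_neg (by omega)]
          simp
        have hfilter : ((Tset a t).filter fun d => ¬ ∃ s ∈ ({p 0} : Set (Fin a →₀ ℕ)), s ≤ d)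
            = Tset a t := by
          apply Finset.filter_true_of_mem
          intro d hd
          rintro ⟨s, rfl, hsd⟩
          have := degD_mono hsd
          rw [mem_Tset.mp hd] at this
          omega
        rw [hfilter, hF2, sub_zero, card_Tset ha' t]
  | succ r hr1 IH =>
    rw [gen, hfq_card]
    rw [gen, hfq_card] at IH
    set Q : Set (Fin a →₀ ℕ) := p '' Set.Iio r with hQ
    have hins : p '' Set.Iio (r + 1) = insert (p r) Q := by
      rw [show (Set.Iio (r+1) : Set ℕ) = insert r (Set.Iio r) from by
        ext x; simp [Nat.lt_succ_iff_lt_or_eq]]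
      exact Set.image_insert_eq
    rw [hins, Finset.sum_Ico_succ_top hr1]
    have hstep := count_step (a := a) Q (p r) t
    have hsyz : ((fun i => (monomial ((p i ⊔ p r) - p r) 1 : MvPolynomial (Fin a) k)) ''
          (Set.Iio r))
        = ((fun s => monomial s (1:k)) '' ((fun s => (s ⊔ p r) - p r) '' Q)) := by
      rw [hQ, Set.image_image, Set.image_image]
    by_cases hle : degD (p r) ≤ t
    · have hterm : HFqZ (k := k) a (Ideal.span
          ((fun i => (monomial ((p i ⊔ p r) - p r) 1 : MvPolynomial (Fin a) k)) ''
            (Set.Iio r))) ((t : ℤ) - degD (p r))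
          = (((Tset a (t - degD (p r))).filter
              fun e => ¬ ∃ s ∈ (fun s => (s ⊔ p r) - p r) '' Q, s ≤ e).card : ℤ) := by
        rw [HFqZ, if_pos (by omega)]
        congr 1
        rw [show ((t : ℤ) - degD (p r)).toNat = t - degD (p r) from by omega, hsyz, hfq_card]
      rw [hterm, ← count_div Q (p r) hle]
      omega
    · have hterm : HFqZ (k := k) a (Ideal.span
          ((fun i => (monomial ((p i ⊔ p r) - p r) 1 : MvPolynomial (Fin a) k)) ''
            (Set.Iio r))) ((t : ℤ) - degD (p r)) = 0 := by
        rw [HFqZ, if_neg (by omega)]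
      rw [hterm]
      rw [count_empty Q (p r) (by omega), Finset.card_empty] at hstep
      omega
end

section
/- Let I = ⟨p_1,...,p_r⟩ be a monomial ideal in R = k[x̄]. A monomial q of degree t represents a nonzero element of R/⟨p_1,...,p_{r−1}⟩ that becomes zero in R/⟨p_1,...,p_r⟩ if and only if q = a·p_r, where a is a monomial of degree t − deg(p_r) that is not divisible by any of the syzygy monomials m_{ir} = lcm(p_i,p_r)/p_r for 1 ≤ i < r; moreover this correspondence q ↔ a is a bijection. -/
/-!
A monomial lies in a monomial ideal iff it is divisible by one of the generators. So `q` is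
killed by `p_r` but not by `p_1, …, p_{r-1}` iff `p_r ∣ q` and `p_i ∤ q` for `i < r`. Writing
`q = a·p_r`, which determines `a`, the condition `p_i ∣ a·p_r` is `lcm(p_i, p_r) ∣ a·p_r`,
i.e. `m_{ir} ∣ a`.
-/

open MvPolynomial

theorem degD_tsub_of_le {n : ℕ} {d e : Fin n →₀ ℕ} (h : e ≤ d) :
    degD (d - e) = degD d - degD e :=
  (map_tsub_of_le Finsupp.degree d e h).symm

theorem sup_tsub_le_tsub_iff {α : Type*} [AddCommMonoid α] [Lattice α] [CanonicallyOrderedAdd α]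
    [Sub α] [OrderedSub α] [AddLeftReflectLE α] {a b c : α} (h : b ≤ c) :
    a ⊔ b - b ≤ c - b ↔ a ≤ c := by
  rw [tsub_le_tsub_iff_right h, sup_le_iff, and_iff_left h]

theorem existsUnique_eq_add_iff {α : Type*} [AddCommMonoid α] [PartialOrder α]
    [CanonicallyOrderedAdd α] [Sub α] [OrderedSub α] [AddLeftReflectLE α] {a b : α}
    {P : α → Prop} :
    (∃! e, a = e + b ∧ P e) ↔ b ≤ a ∧ P (a - b) := by
  constructor
  · rintro ⟨e, ⟨rfl, he⟩, -⟩
    exact ⟨le_add_self, by rwa [add_tsub_cancel_right]⟩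
  · rintro ⟨hba, hP⟩
    refine ⟨a - b, ⟨(tsub_add_cancel_of_le hba).symm, hP⟩, ?_⟩
    rintro e ⟨rfl, -⟩
    exact (add_tsub_cancel_right e b).symm

theorem MvPolynomial.monomial_one_mem_span_monomial_one_image_iff {σ R ι : Type*}
    [CommSemiring R] [Nontrivial R] {p : ι → σ →₀ ℕ} {S : Set ι} {q : σ →₀ ℕ} :
    monomial q (1 : R) ∈ Ideal.span ((fun i => monomial (p i) (1 : R)) '' S) ↔
      ∃ i ∈ S, p i ≤ q := by
  classical
  rw [← Set.image_image (fun s => monomial s (1 : R)) p, mem_ideal_span_monomial_image,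
    support_monomial, if_neg one_ne_zero]
  simp

/-- let `I = ⟨p_1,…,p_r⟩` be a monomial ideal in `R = k[x̄]`.  A monomial
`q` of degree `t` represents a nonzero element of `R/⟨p_1,…,p_{r−1}⟩` that becomes zero
in `R/⟨p_1,…,p_r⟩` iff `q = a·p_r` for a monomial `a` of degree `t − deg p_r` divisible
by none of the syzygy monomials `m_{ir} = lcm(p_i,p_r)/p_r`, `1 ≤ i < r`; moreover such
an `a` is unique (the correspondence `q ↔ a` is a bijection).
(Indices are `0,…,r−1`; `p_r` is `p (r−1)`; divisibility of monomials is `≤` of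
exponent vectors.) -/
theorem syzygy_membership_bijection {k : Type*} [Field k] (A r t : ℕ) (hr : 1 ≤ r)
    (p : ℕ → (Fin A →₀ ℕ)) (q : Fin A →₀ ℕ) (hq : degD q = t) :
    ((monomial q 1 : MvPolynomial (Fin A) k) ∉
        Ideal.span ((fun i => (monomial (p i) 1 : MvPolynomial (Fin A) k)) ''
          (Set.Iio (r - 1))) ∧
      (monomial q 1 : MvPolynomial (Fin A) k) ∈
        Ideal.span ((fun i => (monomial (p i) 1 : MvPolynomial (Fin A) k)) ''
          (Set.Iio r)))
    ↔ ∃! e : Fin A →₀ ℕ,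
        q = e + p (r - 1) ∧ degD e = t - degD (p (r - 1)) ∧
          ∀ i < r - 1, ¬ ((p i ⊔ p (r - 1)) - p (r - 1)) ≤ e := by
  obtain ⟨n, rfl⟩ := Nat.exists_eq_add_of_le' hr
  simp only [monomial_one_mem_span_monomial_one_image_iff, Set.mem_Iio, Nat.add_sub_cancel,
    existsUnique_eq_add_iff, Nat.exists_lt_succ_right, ← hq]
  constructor
  · rintro ⟨hlow, hlow' | hn⟩
    · exact absurd hlow' hlow
    · exact ⟨hn, degD_tsub_of_le hn,
        fun i hi hdvd => hlow ⟨i, hi, (sup_tsub_le_tsub_iff hn).mp hdvd⟩⟩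
  · rintro ⟨hn, -, hsyz⟩
    exact ⟨fun ⟨i, hi, hdvd⟩ => hsyz i hi ((sup_tsub_le_tsub_iff hn).mpr hdvd), Or.inr hn⟩
end

section
/- Let I = ⟨p_1,...,p_r⟩ with p_i monomials in k[x̄]. Then HF(R/⟨p_1,...,p_r⟩, t) = HF(R/⟨p_1,...,p_{r−1}⟩, t) − HF(R/⟨m_{1r},...,m_{(r−1)r}⟩, t − deg p_r), where m_{ir} = lcm(p_i,p_r)/p_r. -/
open MvPolynomial

set_option maxHeartbeats 1000000

section comb
variable {a : ℕ}

lemma degree_add' (d e : Fin a →₀ ℕ) :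
    Finsupp.degree (d + e) = Finsupp.degree d + Finsupp.degree e := by
  show (d + e).sum (fun _ n => n) = d.sum (fun _ n => n) + e.sum (fun _ n => n)
  exact Finsupp.sum_add_index' (fun _ => rfl) (fun _ _ _ => rfl)

lemma degree_mono' {d e : Fin a →₀ ℕ} (h : d ≤ e) :
    Finsupp.degree d ≤ Finsupp.degree e := by
  obtain ⟨c, rfl⟩ := exists_add_of_le h
  rw [degree_add']
  exact Nat.le_add_right _ _

lemma count_split (r t : ℕ) (hr : 1 ≤ r) (p : ℕ → (Fin a →₀ ℕ)) :
    {d : Fin a →₀ ℕ | Finsupp.degree d = t ∧ ∀ g ∈ p '' Set.Iio (r-1), ¬ g ≤ d}.ncard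
    = {d : Fin a →₀ ℕ | Finsupp.degree d = t ∧ ∀ g ∈ p '' Set.Iio r, ¬ g ≤ d}.ncard
    + {d : Fin a →₀ ℕ | Finsupp.degree d = t ∧ p (r-1) ≤ d
        ∧ ∀ g ∈ p '' Set.Iio (r-1), ¬ g ≤ d}.ncard := by
  have hfin : {d : Fin a →₀ ℕ | Finsupp.degree d ≤ t}.Finite := Finsupp.finite_of_degree_le t
  have hunion : {d : Fin a →₀ ℕ | Finsupp.degree d = t ∧ ∀ g ∈ p '' Set.Iio (r-1), ¬ g ≤ d}
      = {d : Fin a →₀ ℕ | Finsupp.degree d = t ∧ ∀ g ∈ p '' Set.Iio r, ¬ g ≤ d}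
      ∪ {d : Fin a →₀ ℕ | Finsupp.degree d = t ∧ p (r-1) ≤ d
          ∧ ∀ g ∈ p '' Set.Iio (r-1), ¬ g ≤ d} := by
    ext d
    simp only [Set.mem_setOf_eq, Set.mem_union, Set.forall_mem_image, Set.mem_Iio]
    constructor
    · rintro ⟨hdeg, h⟩
      by_cases hq : p (r-1) ≤ d
      · exact Or.inr ⟨hdeg, hq, fun i hi => h hi⟩
      · refine Or.inl ⟨hdeg, fun i hi => ?_⟩
        rcases Nat.lt_or_ge i (r-1) with h' | h'
        · exact h h'
        · have : i = r - 1 := by omega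
          exact this ▸ hq
    · rintro (⟨hdeg, h⟩ | ⟨hdeg, _, h⟩)
      · exact ⟨hdeg, fun i hi => h (by omega)⟩
      · exact ⟨hdeg, fun i hi => h hi⟩
  have hdisj : Disjoint {d : Fin a →₀ ℕ | Finsupp.degree d = t ∧ ∀ g ∈ p '' Set.Iio r, ¬ g ≤ d}
      {d : Fin a →₀ ℕ | Finsupp.degree d = t ∧ p (r-1) ≤ d
        ∧ ∀ g ∈ p '' Set.Iio (r-1), ¬ g ≤ d} := by
    rw [Set.disjoint_left]
    rintro d ⟨_, h⟩ ⟨_, hq, _⟩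
    exact h (p (r-1)) ⟨r-1, by simp only [Set.mem_Iio]; omega, rfl⟩ hq
  rw [hunion, Set.ncard_union_eq hdisj
    (hfin.subset fun d hd => le_of_eq hd.1) (hfin.subset fun d hd => le_of_eq hd.1)]

lemma count_D_eq_C (r' t : ℕ) (p : ℕ → (Fin a →₀ ℕ)) (q0 : Fin a →₀ ℕ)
    (h : Finsupp.degree q0 ≤ t) :
    {d : Fin a →₀ ℕ | Finsupp.degree d = t ∧ q0 ≤ d ∧ ∀ g ∈ p '' Set.Iio r', ¬ g ≤ d}.ncard
    = {e : Fin a →₀ ℕ | Finsupp.degree e = t - Finsupp.degree q0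
        ∧ ∀ g ∈ (fun i => (p i ⊔ q0) - q0) '' Set.Iio r', ¬ g ≤ e}.ncard := by
  have himg : {d : Fin a →₀ ℕ | Finsupp.degree d = t ∧ q0 ≤ d ∧ ∀ g ∈ p '' Set.Iio r', ¬ g ≤ d}
      = (fun e => e + q0) '' {e : Fin a →₀ ℕ | Finsupp.degree e = t - Finsupp.degree q0
          ∧ ∀ g ∈ (fun i => (p i ⊔ q0) - q0) '' Set.Iio r', ¬ g ≤ e} := by
    ext d
    simp only [Set.mem_setOf_eq, Set.mem_image, Set.forall_mem_image, Set.mem_Iio]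
    constructor
    · rintro ⟨hdeg, hq, hgood⟩
      refine ⟨d - q0, ⟨?_, ?_⟩, tsub_add_cancel_of_le hq⟩
      · have hd : (d - q0) + q0 = d := tsub_add_cancel_of_le hq
        have := degree_add' (d - q0) q0
        rw [hd] at this
        omega
      · rintro g ⟨i, hi, rfl⟩ hle
        refine hgood _ ⟨i, hi, rfl⟩ ?_
        have h1 : p i ⊔ q0 ≤ (d - q0) + q0 := tsub_le_iff_right.1 hle
        rw [tsub_add_cancel_of_le hq] at h1
        exact le_sup_left.trans h1
    · rintro ⟨e, ⟨hdeg, hgood⟩, rfl⟩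
      refine ⟨?_, le_add_self, ?_⟩
      · rw [degree_add', hdeg]
        omega
      · rintro g ⟨i, hi, rfl⟩ hle
        exact hgood _ ⟨i, hi, rfl⟩ (tsub_le_iff_right.2 (sup_le hle le_add_self))
  rw [himg, Set.ncard_image_of_injective _ (add_left_injective q0)]

lemma count_D_empty (r' t : ℕ) (p : ℕ → (Fin a →₀ ℕ)) (q0 : Fin a →₀ ℕ)
    (h : t < Finsupp.degree q0) :
    {d : Fin a →₀ ℕ | Finsupp.degree d = t ∧ q0 ≤ d ∧ ∀ g ∈ p '' Set.Iio r', ¬ g ≤ d}.ncard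
      = 0 := by
  have hempty : {d : Fin a →₀ ℕ | Finsupp.degree d = t ∧ q0 ≤ d
      ∧ ∀ g ∈ p '' Set.Iio r', ¬ g ≤ d} = ∅ := by
    ext d
    simp only [Set.mem_setOf_eq, Set.mem_empty_iff_false, iff_false, not_and]
    intro hdeg hq
    exact absurd (degree_mono' hq) (by omega)
  rw [hempty, Set.ncard_empty]

end comb

section aux
variable {k : Type*} [Field k] {a : ℕ}

lemma support_subset_of_mem_span_monomials (S : Set (Fin a →₀ ℕ))
    (f : MvPolynomial (Fin a) k)
    (hf : f ∈ Submodule.span k ((fun d => (monomial d 1 : MvPolynomial (Fin a) k)) '' S)) :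
    ↑f.support ⊆ S := by
  classical
  induction hf using Submodule.span_induction with
  | mem x hx =>
    obtain ⟨d, hd, rfl⟩ := hx
    intro m hm
    rw [support_monomial, if_neg (one_ne_zero (α := k))] at hm
    simp only [Finset.coe_singleton, Set.mem_singleton_iff] at hm
    exact hm ▸ hd
  | zero => simp
  | add x y hx hy ihx ihy =>
    intro m hm
    rcases Finset.mem_union.1 (support_add (Finset.mem_coe.1 hm)) with h | h
    · exact ihx h
    · exact ihy h
  | smul c x hx ih =>
    exact subset_trans (Finset.coe_subset.2 (support_smul)) ih

lemma HFq_eq_ncard (G : Set (Fin a →₀ ℕ)) (t : ℕ) :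
    HFq (k := k) a (Ideal.span ((fun d => (monomial d 1 : MvPolynomial (Fin a) k)) '' G)) t
      = Set.ncard {d : Fin a →₀ ℕ | Finsupp.degree d = t ∧ ∀ g ∈ G, ¬ g ≤ d} := by
  classical
  set I : Ideal (MvPolynomial (Fin a) k) :=
    Ideal.span ((fun d => (monomial d 1 : MvPolynomial (Fin a) k)) '' G) with hI
  set S : Set (Fin a →₀ ℕ) := {d | Finsupp.degree d = t ∧ ∀ g ∈ G, ¬ g ≤ d} with hS
  have hSfin : S.Finite := (Finsupp.finite_of_degree_le t).subset (fun d hd => le_of_eq hd.1)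
  haveI := hSfin.fintype
  set q := (I.restrictScalars k).mkQ with hq
  have hbad : ∀ d : Fin a →₀ ℕ, (∃ g ∈ G, g ≤ d) → q (monomial d 1) = 0 := by
    intro d hd
    rw [hq, Submodule.mkQ_apply, Submodule.Quotient.mk_eq_zero]
    show (monomial d 1 : MvPolynomial (Fin a) k) ∈ I
    rw [hI, mem_ideal_span_monomial_image]
    intro xi hxi
    rw [support_monomial, if_neg (one_ne_zero (α := k)), Finset.mem_singleton] at hxi
    exact hxi ▸ hd
  have hli0 : LinearIndependent k
      (fun d : S => (monomial (d : Fin a →₀ ℕ) 1 : MvPolynomial (Fin a) k)) := by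
    have := (basisMonomials (Fin a) k).linearIndependent.comp
      (fun d : S => (d : Fin a →₀ ℕ)) Subtype.coe_injective
    rw [coe_basisMonomials] at this
    exact this
  have hdisj : Disjoint (Submodule.span k
      (Set.range fun d : S => (monomial (d : Fin a →₀ ℕ) 1 : MvPolynomial (Fin a) k)))
      (LinearMap.ker q) := by
    rw [Submodule.disjoint_def]
    intro f hf hker
    rw [hq, Submodule.ker_mkQ] at hker
    have hker' : f ∈ I := hker
    by_contra hne
    have hsupp : (f.support : Set (Fin a →₀ ℕ)) ⊆ S := by
      apply support_subset_of_mem_span_monomials S f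
      rwa [Set.image_eq_range]
    obtain ⟨m, hm⟩ := (support_nonempty.2 hne)
    obtain ⟨g, hg, hle⟩ := mem_ideal_span_monomial_image.1 (hI ▸ hker') m hm
    exact (hsupp hm).2 g hg hle
  have hli : LinearIndependent k (fun d : S => q (monomial (d : Fin a →₀ ℕ) 1)) :=
    hli0.map hdisj
  have hspan : (homogeneousSubmodule (Fin a) k t).map q
      = Submodule.span k (Set.range fun d : S => q (monomial (d : Fin a →₀ ℕ) 1)) := by
    apply le_antisymm
    · rintro x ⟨f, hf, rfl⟩
      have hf' : IsHomogeneous f t := (mem_homogeneousSubmodule _ _).1 hf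
      have hqf : q f = ∑ v ∈ f.support, q (monomial v (coeff v f)) := by
        conv_lhs => rw [f.as_sum]
        exact map_sum q _ _
      rw [hqf]
      apply Submodule.sum_mem
      intro v hv
      have hvdeg : Finsupp.degree v = t := by
        rw [Finsupp.degree_eq_weight_one]
        exact hf' (mem_support_iff.1 hv)
      have hmon : (monomial v (coeff v f) : MvPolynomial (Fin a) k)
          = coeff v f • monomial v 1 := by
        rw [smul_monomial, smul_eq_mul, mul_one]
      by_cases hvS : v ∈ S
      · rw [hmon, map_smul]
        exact Submodule.smul_mem _ _ (Submodule.subset_span ⟨⟨v, hvS⟩, rfl⟩)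
      · have hex : ∃ g ∈ G, g ≤ v := by
          by_contra hno
          push_neg at hno
          exact hvS ⟨hvdeg, hno⟩
        rw [hmon, map_smul, hbad v hex, smul_zero]
        exact Submodule.zero_mem _
    · rw [Submodule.span_le]
      rintro x ⟨d, rfl⟩
      exact ⟨monomial (d : Fin a →₀ ℕ) 1,
        (mem_homogeneousSubmodule _ _).2 (isHomogeneous_monomial _ d.2.1), rfl⟩
  rw [HFq, hspan, finrank_span_eq_card hli, ← Nat.card_coe_set_eq, Nat.card_eq_fintype_card]

end aux

/-- for monomials `p_1,…,p_r` in `R = k[x_1,…,x_a]`,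
`HF(R/⟨p_1,…,p_r⟩, t) = HF(R/⟨p_1,…,p_{r−1}⟩, t) − HF(R/⟨m_{1r},…,m_{(r−1)r}⟩, t − deg p_r)`
where `m_{ir} = lcm(p_i,p_r)/p_r` and `HF` at negative degrees is `0`.
(Indices are `0,…,r−1`, so `p_r` is `p (r−1)`.) -/
theorem syzygy_method_step {k : Type*} [Field k] (a r t : ℕ) (hr : 1 ≤ r)
    (p : ℕ → (Fin a →₀ ℕ)) :
    (HFq (k := k) a (Ideal.span
        ((fun i => (monomial (p i) 1 : MvPolynomial (Fin a) k)) '' (Set.Iio r))) t : ℤ)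
      = (HFq (k := k) a (Ideal.span
          ((fun i => (monomial (p i) 1 : MvPolynomial (Fin a) k)) ''
            (Set.Iio (r - 1)))) t : ℤ)
        - HFqZ (k := k) a (Ideal.span
            ((fun i => (monomial ((p i ⊔ p (r - 1)) - p (r - 1)) 1 :
                MvPolynomial (Fin a) k)) '' (Set.Iio (r - 1))))
            ((t : ℤ) - degD (p (r - 1))) := by
  classical
  have himg1 : ((fun i => (monomial (p i) 1 : MvPolynomial (Fin a) k)) '' (Set.Iio r))
      = (fun d => (monomial d 1 : MvPolynomial (Fin a) k)) '' (p '' Set.Iio r) :=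
    by rw [Set.image_image]
  have himg2 : ((fun i => (monomial (p i) 1 : MvPolynomial (Fin a) k)) '' (Set.Iio (r-1)))
      = (fun d => (monomial d 1 : MvPolynomial (Fin a) k)) '' (p '' Set.Iio (r-1)) :=
    by rw [Set.image_image]
  have himg3 : ((fun i => (monomial ((p i ⊔ p (r - 1)) - p (r - 1)) 1 :
        MvPolynomial (Fin a) k)) '' (Set.Iio (r-1)))
      = (fun d => (monomial d 1 : MvPolynomial (Fin a) k)) ''
        ((fun i => (p i ⊔ p (r-1)) - p (r-1)) '' Set.Iio (r-1)) :=
    by rw [Set.image_image]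
  have hdeg : degD (p (r-1)) = Finsupp.degree (p (r-1)) := rfl
  rw [himg1, himg2, himg3, HFq_eq_ncard, HFq_eq_ncard, hdeg]
  simp only [HFqZ]
  have hsplit := count_split r t hr p
  by_cases hcase : Finsupp.degree (p (r-1)) ≤ t
  · rw [if_pos (by omega)]
    have htn : (((t : ℤ) - ((Finsupp.degree (p (r-1)) : ℕ) : ℤ)).toNat)
        = t - Finsupp.degree (p (r-1)) := by omega
    rw [htn, HFq_eq_ncard]
    have hDC := count_D_eq_C (r-1) t p (p (r-1)) hcase
    rw [← hDC]
    omega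
  · rw [if_neg (by omega)]
    have hD0 := count_D_empty (r-1) t p (p (r-1)) (by omega)
    omega
end
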